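/- The function R(s,t) = min{s,t} - st - 3(s-s²)(t-t²) on [0,1]² is positive semidefinite, i.e., for all n, all points s_1,…,s_n ∈ [0,1] and reals c_1,…,c_n, we have Σ_{i,j} c_i c_j R(s_i,s_j) ≥ 0. -/

import Mathlib

/-!
For `a ∈ [0,1]` let `φ_a = 1_{[0,a]} - πₐ`, where `πₐ(u) = a + 3(a - a²)(1 - 2u)` is the
orthogonal projection of `1_{[0,a]}` onto the affine functions in `L²[0,1]` (the coefficients
`a` and `√3 (a - a²)` are the inner products of `1_{[0,a]}` with the orthonormal basis
`1, √3 (1 - 2u)`). Since `φ_b` is orthogonal to `πₐ`,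
`∫₀¹ φ_a φ_b = ∫₀ᵃ φ_b = min a b - a b - 3 (a - a²)(b - b²)`, so the covariance is a Gram
kernel in `L²[0,1]` and its quadratic form is `∫₀¹ (∑ cᵢ φ_{sᵢ})² ≥ 0`.
-/

open Set MeasureTheory

theorem sum_sum_mul_integral_mul_nonneg {ι X : Type*} [Fintype ι] [MeasurableSpace X]
    {μ : Measure X} {f : ι → X → ℝ} (hf : ∀ i, MemLp (f i) 2 μ) (c : ι → ℝ) :
    0 ≤ ∑ i, ∑ j, c i * c j * ∫ x, f i x * f j x ∂μ := by
  have hint : ∀ i j, Integrable (fun x => c i * f i x * (c j * f j x)) μ := fun i j =>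
    ((hf i).const_mul (c i)).integrable_mul ((hf j).const_mul (c j))
  calc 0 ≤ ∫ x, (∑ i, c i * f i x) ^ 2 ∂μ := integral_nonneg fun x => sq_nonneg _
    _ = ∑ i, ∑ j, c i * c j * ∫ x, f i x * f j x ∂μ := by
      simp_rw [sq, Finset.sum_mul_sum]
      rw [integral_finsetSum _ fun i _ => integrable_finsetSum _ fun j _ => hint i j]
      refine Finset.sum_congr rfl fun i _ => ?_
      rw [integral_finsetSum _ fun j _ => hint i j]
      refine Finset.sum_congr rfl fun j _ => ?_
      rw [← integral_const_mul]
      exact integral_congr_ae (Filter.Eventually.of_forall fun x => by ring)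

theorem IntervalIntegrable.indicator_Iic {E : Type*} [NormedAddCommGroup E] {μ : Measure ℝ}
    {f : ℝ → E} {x y : ℝ} (hf : IntervalIntegrable f μ x y) (a : ℝ) :
    IntervalIntegrable ((Iic a).indicator f) μ x y :=
  ⟨hf.1.indicator measurableSet_Iic, hf.2.indicator measurableSet_Iic⟩

theorem integral_affine (p q m : ℝ) :
    ∫ u in (0:ℝ)..m, (p + q * u) = p * m + q * m ^ 2 / 2 := by
  rw [intervalIntegral.integral_add intervalIntegrable_const
      (Continuous.intervalIntegrable (by fun_prop) _ _),
    intervalIntegral.integral_const, intervalIntegral.integral_const_mul, integral_id, smul_eq_mul]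
  ring

theorem integral_quadratic (p q r : ℝ) :
    ∫ u in (0:ℝ)..1, (p + q * u + r * u ^ 2) = p + q / 2 + r / 3 := by
  rw [intervalIntegral.integral_add (Continuous.intervalIntegrable (by fun_prop) _ _)
      (Continuous.intervalIntegrable (by fun_prop) _ _),
    integral_affine, intervalIntegral.integral_const_mul, integral_pow]
  ring

theorem integral_indicator_Iic_one {a b : ℝ} (ha : 0 ≤ a) (hb : 0 ≤ b) :
    ∫ u in (0:ℝ)..a, (Iic b).indicator 1 u = min a b := by
  rw [intervalIntegral.integral_of_le ha, integral_indicator_one measurableSet_Iic,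
    measureReal_restrict_apply measurableSet_Iic, inter_comm, Ioc_inter_Iic,
    Real.volume_real_Ioc]
  simp [ha, hb]

noncomputable def bridgeFeature (a u : ℝ) : ℝ :=
  (Iic a).indicator 1 u - (a + 3 * (a - a ^ 2) * (1 - 2 * u))

theorem intervalIntegrable_bridgeFeature (a x y : ℝ) :
    IntervalIntegrable (bridgeFeature a) volume x y :=
  (intervalIntegrable_const.indicator_Iic a).sub
    (Continuous.intervalIntegrable (by fun_prop) _ _)

theorem memLp_bridgeFeature (a : ℝ) (p : ENNReal) :
    MemLp (bridgeFeature a) p (volume.restrict (Ioc 0 1)) := by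
  refine MemLp.of_bound ?_ (1 + |a| + 3 * |a - a ^ 2|) ?_
  · exact ((measurable_const.indicator measurableSet_Iic).sub (by fun_prop)).aestronglyMeasurable
  · filter_upwards [ae_restrict_mem measurableSet_Ioc] with u hu
    have h_ind : |(Iic a).indicator (1 : ℝ → ℝ) u| ≤ 1 := by
      by_cases h : u ≤ a <;> simp [h]
    have h_lin : |1 - 2 * u| ≤ 1 := abs_le.2 ⟨by linarith [hu.2], by linarith [hu.1]⟩
    calc ‖bridgeFeature a u‖
        ≤ |(Iic a).indicator (1 : ℝ → ℝ) u| + (|a| + |3 * (a - a ^ 2) * (1 - 2 * u)|) := by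
          rw [Real.norm_eq_abs, bridgeFeature]
          exact (abs_sub _ _).trans (by gcongr; exact abs_add_le _ _)
      _ ≤ 1 + (|a| + 3 * |a - a ^ 2| * 1) := by
          rw [abs_mul, abs_mul, abs_of_pos (by norm_num : (0:ℝ) < 3)]
          gcongr
      _ = 1 + |a| + 3 * |a - a ^ 2| := by ring

theorem integral_bridgeFeature_mul_affine {a : ℝ} (ha : a ∈ Icc (0:ℝ) 1) (p q : ℝ) :
    ∫ u in (0:ℝ)..1, bridgeFeature a u * (p + q * u) = 0 := by
  have hsplit : ∀ u, bridgeFeature a u * (p + q * u) = (Iic a).indicator (fun u => p + q * u) u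
      - ((a + 3 * (a - a ^ 2)) * p + ((a + 3 * (a - a ^ 2)) * q - 6 * (a - a ^ 2) * p) * u
        + (-6 * (a - a ^ 2) * q) * u ^ 2) := by
    intro u
    simp only [bridgeFeature, indicator_apply, mem_Iic, Pi.one_apply]
    split_ifs <;> ring
  simp_rw [hsplit]
  rw [intervalIntegral.integral_sub
      ((Continuous.intervalIntegrable (by fun_prop) _ _).indicator_Iic a)
      (Continuous.intervalIntegrable (by fun_prop) _ _),
    ← Iic_def, intervalIntegral.integral_indicator ha, integral_affine, integral_quadratic]
  ring

theorem integral_bridgeFeature {a b : ℝ} (ha : 0 ≤ a) (hb : 0 ≤ b) :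
    ∫ u in (0:ℝ)..a, bridgeFeature b u = min a b - a * b - 3 * (a - a ^ 2) * (b - b ^ 2) := by
  have h_affine : ∀ u, b + 3 * (b - b ^ 2) * (1 - 2 * u)
      = (b + 3 * (b - b ^ 2)) + (-6 * (b - b ^ 2)) * u := fun u => by ring
  simp only [bridgeFeature, h_affine]
  rw [intervalIntegral.integral_sub
      (IntervalIntegrable.indicator_Iic (f := 1) intervalIntegrable_const b)
      (Continuous.intervalIntegrable (by fun_prop) _ _),
    integral_indicator_Iic_one ha hb, integral_affine]
  ring

theorem integral_bridgeFeature_mul {a b : ℝ} (ha : a ∈ Icc (0:ℝ) 1) (hb : b ∈ Icc (0:ℝ) 1) :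
    ∫ u in (0:ℝ)..1, bridgeFeature a u * bridgeFeature b u
      = min a b - a * b - 3 * (a - a ^ 2) * (b - b ^ 2) := by
  have hsplit : ∀ u, bridgeFeature a u * bridgeFeature b u
      = (Iic a).indicator (bridgeFeature b) u
        - bridgeFeature b u * ((a + 3 * (a - a ^ 2)) + (-6 * (a - a ^ 2)) * u) := by
    intro u
    simp only [bridgeFeature, indicator_apply, mem_Iic, Pi.one_apply]
    split_ifs <;> ring
  have hb_int := intervalIntegrable_bridgeFeature b 0 1
  simp_rw [hsplit]
  rw [intervalIntegral.integral_sub (hb_int.indicator_Iic a)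
      (hb_int.mul_continuousOn (by fun_prop)),
    ← Iic_def, intervalIntegral.integral_indicator ha, integral_bridgeFeature_mul_affine hb,
    integral_bridgeFeature ha.1 hb.1, sub_zero]

/-- The covariance function `R(s,t) = min{s,t} - s t - 3 (s - s²)(t - t²)` of the
zero area Brownian bridge is positive semidefinite on `[0,1]²`. -/
theorem zero_area_brownian_bridge_cov_posSemidef
    (n : ℕ) (s : Fin n → ℝ) (hs : ∀ i, s i ∈ Icc (0:ℝ) 1) (c : Fin n → ℝ) :
    0 ≤ ∑ i, ∑ j, c i * c j *
      (min (s i) (s j) - s i * s j - 3*(s i - (s i)^2)*(s j - (s j)^2)) := by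
  have h_gram : ∀ i j, min (s i) (s j) - s i * s j - 3*(s i - (s i)^2)*(s j - (s j)^2)
      = ∫ u, bridgeFeature (s i) u * bridgeFeature (s j) u ∂volume.restrict (Ioc 0 1) := by
    intro i j
    rw [← intervalIntegral.integral_of_le zero_le_one, integral_bridgeFeature_mul (hs i) (hs j)]
  simp_rw [h_gram]
  exact sum_sum_mul_integral_mul_nonneg (fun i => memLp_bridgeFeature (s i) 2) c
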